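/- arXiv:2501.03298 — 6 statements merged into one kernel-verified Lean document; each statement's English description precedes it below -/
import Mathlib

section
/- Standard base-semantic consequence is non-monotonic: there exist a finite set of formulas Γ, a formula A, and atomic bases 𝔅 ⊆ 𝔇 such that Γ ⊨_𝔅 A holds but Γ ⊨_𝔇 A fails. Concretely, with Γ = {p₁}, A = p₂, 𝔅 = ∅ and 𝔇 = {p₁}, we have {p₁} ⊨_∅ p₂ but {p₁} ⊭_{p₁} p₂. -/
/-- Atomic rules of arbitrary level: a rule has a list of premises,
each premise consisting of a list of dischargeable lower-level rules
and an atomic conclusion, together with an atomic conclusion. -/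
inductive Rule where
  | mk : List (List Rule × Nat) → Nat → Rule

/-- A level-0 rule (atomic axiom). -/
def Rule.ax (a : Nat) : Rule := Rule.mk [] a

/-- Atomic derivability over an atomic base (a set of atomic rules). -/
inductive Derives : Set Rule → Nat → Prop where
  | intro {B : Set Rule} {prems : List (List Rule × Nat)} {a : Nat}
      (hmem : Rule.mk prems a ∈ B)
      (hprem : ∀ p ∈ prems, Derives (B ∪ {r | r ∈ p.1}) p.2) :
      Derives B a

/-- Propositional formulas: atoms, ⊥, ∧, ∨, →. -/
inductive Form where
  | atom : Nat → Form
  | bot : Form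
  | and : Form → Form → Form
  | or : Form → Form → Form
  | imp : Form → Form → Form

/-- Substitution of formulas for atoms. -/
def Form.subst (σ : Nat → Form) : Form → Form
  | .atom a => σ a
  | .bot => .bot
  | .and A B => .and (A.subst σ) (B.subst σ)
  | .or A B => .or (A.subst σ) (B.subst σ)
  | .imp A B => .imp (A.subst σ) (B.subst σ)

/-- Categorical validity on a base, standard (non-monotonic) base semantics.
The atomic constant ⊥ is never valid (bases are assumed consistent). -/
def Valid (B : Set Rule) : Form → Prop
  | .atom a => Derives B a
  | .bot => False
  | .and A C => Valid B A ∧ Valid B C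
  | .or A C => Valid B A ∨ Valid B C
  | .imp A C => Valid B A → Valid B C

/-- Hypothetical consequence on a base `B`: `Γ ⊨_B A`. -/
def Cons (B : Set Rule) (Γ : Set Form) (A : Form) : Prop :=
  (∀ C ∈ Γ, Valid B C) → Valid B A

/-- Categorical validity in Sandqvist's variant: disjunction is explained
in elimination style, quantifying over atomic conclusions. -/
def SValid (B : Set Rule) : Form → Prop
  | .atom a => Derives B a
  | .bot => False
  | .and A C => SValid B A ∧ SValid B C
  | .or A C => ∀ c : Nat,
      (SValid B A → Derives B c) → (SValid B C → Derives B c) → Derives B c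
  | .imp A C => SValid B A → SValid B C

/-- Hypothetical consequence on a base, Sandqvist's variant: `Γ ⊨ˢ_B A`. -/
def SCons (B : Set Rule) (Γ : Set Form) (A : Form) : Prop :=
  (∀ C ∈ Γ, SValid B C) → SValid B A

/-- Intuitionistic propositional natural deduction. -/
inductive IL : Set Form → Form → Prop where
  | ax {Γ : Set Form} {A : Form} : A ∈ Γ → IL Γ A
  | andI {Γ A B} : IL Γ A → IL Γ B → IL Γ (Form.and A B)
  | andE1 {Γ A B} : IL Γ (Form.and A B) → IL Γ A
  | andE2 {Γ A B} : IL Γ (Form.and A B) → IL Γ B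
  | orI1 {Γ A B} : IL Γ A → IL Γ (Form.or A B)
  | orI2 {Γ A B} : IL Γ B → IL Γ (Form.or A B)
  | orE {Γ A B C} : IL Γ (Form.or A B) → IL (insert A Γ) C →
      IL (insert B Γ) C → IL Γ C
  | impI {Γ A B} : IL (insert A Γ) B → IL Γ (Form.imp A B)
  | impE {Γ A B} : IL Γ (Form.imp A B) → IL Γ A → IL Γ B
  | botE {Γ A} : IL Γ Form.bot → IL Γ A

/-- Intuitionistic natural deduction augmented with an atomic base:
`ILB B Γ A` is `Γ ⊢_{IL ∪ B} A`. -/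
inductive ILB : Set Rule → Set Form → Form → Prop where
  | ax {B : Set Rule} {Γ : Set Form} {A : Form} : A ∈ Γ → ILB B Γ A
  | andI {B Γ A C} : ILB B Γ A → ILB B Γ C → ILB B Γ (Form.and A C)
  | andE1 {B Γ A C} : ILB B Γ (Form.and A C) → ILB B Γ A
  | andE2 {B Γ A C} : ILB B Γ (Form.and A C) → ILB B Γ C
  | orI1 {B Γ A C} : ILB B Γ A → ILB B Γ (Form.or A C)
  | orI2 {B Γ A C} : ILB B Γ C → ILB B Γ (Form.or A C)
  | orE {B Γ A C D} : ILB B Γ (Form.or A C) → ILB B (insert A Γ) D →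
      ILB B (insert C Γ) D → ILB B Γ D
  | impI {B Γ A C} : ILB B (insert A Γ) C → ILB B Γ (Form.imp A C)
  | impE {B Γ A C} : ILB B Γ (Form.imp A C) → ILB B Γ A → ILB B Γ C
  | botE {B Γ A} : ILB B Γ Form.bot → ILB B Γ A
  | base {B : Set Rule} {Γ : Set Form} {prems : List (List Rule × Nat)} {a : Nat} :
      Rule.mk prems a ∈ B →
      (∀ p ∈ prems, ILB (B ∪ {r | r ∈ p.1}) Γ (Form.atom p.2)) →
      ILB B Γ (Form.atom a)

lemma empty_not_derives (a : Nat) : ¬ Derives ∅ a := by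
  intro h
  cases h with
  | intro hmem _ => exact hmem

lemma ax_derives (a : Nat) : Derives {Rule.ax a} a :=
  Derives.intro rfl (by simp)

lemma ax_derives_only {a b : Nat} (h : Derives {Rule.ax a} b) : b = a := by
  cases h with
  | intro hmem _ =>
    have := hmem
    simp [Rule.ax, Set.mem_singleton_iff] at this
    exact this.2

/-- Standard base-semantic consequence is non-monotonic. -/
theorem stmt0 (p₁ p₂ : Nat) (hpq : p₁ ≠ p₂) :
    Cons ∅ {Form.atom p₁} (Form.atom p₂) ∧
    ¬ Cons {Rule.ax p₁} {Form.atom p₁} (Form.atom p₂) ∧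
    ∃ (Γ : Set Form) (A : Form) (𝔅 𝔇 : Set Rule),
      Γ.Finite ∧ 𝔅 ⊆ 𝔇 ∧ Cons 𝔅 Γ A ∧ ¬ Cons 𝔇 Γ A := by
  have h1 : Cons ∅ {Form.atom p₁} (Form.atom p₂) := by
    intro h
    exact absurd (h (Form.atom p₁) rfl) (empty_not_derives p₁)
  have h2 : ¬ Cons {Rule.ax p₁} {Form.atom p₁} (Form.atom p₂) := by
    intro h
    have := h (by rintro C rfl; exact ax_derives p₁)
    exact hpq (ax_derives_only this).symm
  exact ⟨h1, h2, {Form.atom p₁}, Form.atom p₂, ∅, {Rule.ax p₁},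
    Set.finite_singleton _, Set.empty_subset _, h1, h2⟩
end

section
/- In a generic semantics setting: let L be a consequence relation ⊢_Σ over propositional formulas that is closed under substitutions and consistent (i.e., not every sequent is derivable, in particular A ⊬_Σ B for some A, B). If Σ is base-complete over ⊨ (i.e., for all finite Γ, formulas A, and bases 𝔅: Γ ⊨_𝔅 A implies Γ ⊢_{Σ∪𝔅} A), then contradiction follows: from p ⊨_{𝔅∅} q one gets p ⊢_Σ q, hence by substitution closure A ⊢_Σ B for all A, B, contradicting consistency. Therefore no consistent substitution-closed logic is base-complete over non-monotonic standard base semantics. -/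
/-- No consistent substitution-closed logic is base-complete
over non-monotonic standard base semantics. -/
theorem stmt3 (T : Set Rule → Set Form → Form → Prop)
    (hsubst : ∀ (σ : Nat → Form) (Γ : Set Form) (A : Form),
      T ∅ Γ A ↔ T ∅ (Form.subst σ '' Γ) (A.subst σ))
    (hconsistent : ∃ A B : Form, ¬ T ∅ {A} B)
    (hbasecomplete : ∀ (Γ : Set Form) (A : Form) (𝔅 : Set Rule),
      Γ.Finite → Cons 𝔅 Γ A → T 𝔅 Γ A) :
    False := by
  obtain ⟨A, B, hAB⟩ := hconsistent
  have hnd : ¬ Derives ∅ 0 := by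
    intro h; cases h with
    | intro hmem _ => exact hmem
  have hcons : Cons ∅ {Form.atom 0} (Form.atom 1) := by
    intro h
    exact absurd (h (Form.atom 0) rfl) hnd
  have hT : T ∅ {Form.atom 0} (Form.atom 1) :=
    hbasecomplete _ _ _ (Set.finite_singleton _) hcons
  have := (hsubst (fun n => if n = 0 then A else B) {Form.atom 0} (Form.atom 1)).mp hT
  simp [Form.subst, Set.image_singleton] at this
  exact hAB this
end

section
/- Non-monotonic standard base semantics fails the export principle: there is no translation-compatible export, since p ⊨_{𝔅∅} q holds on the empty base but the exported statement p ⊨ q (logical consequence, as the empty base translates to the empty set of formulas) is false, witnessed by the base {p}. -/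
/-- Non-monotonic standard base semantics fails the export
principle, for any base-translation `star` sending the empty base to the
empty set of formulas: `p ⊨_{𝔅∅} q` holds but the exported statement
`p ⊨ q` is false, witnessed by the base `{p}`. -/
theorem stmt8 (star : Set Rule → Set Form) (hstar : star ∅ = ∅)
    (p q : Nat) (hpq : p ≠ q) :
    ¬ (∀ (𝔅 : Set Rule) (Γ : Set Form) (A : Form),
        Cons 𝔅 Γ A ↔ ∀ 𝔇 : Set Rule, Cons 𝔇 (Γ ∪ star 𝔅) A) := by
  intro H
  have hempty : ∀ a, ¬ Derives ∅ a := by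
    intro a h
    cases h with
    | intro hmem _ => exact hmem
  have hcons : Cons ∅ {Form.atom p} (Form.atom q) := by
    intro h
    exact absurd (h (Form.atom p) rfl) (hempty p)
  have h2 := (H ∅ {Form.atom p} (Form.atom q)).mp hcons {Rule.ax p}
  have honly : ∀ c, Derives {Rule.ax p} c → c = p := by
    intro c h
    cases h with
    | intro hmem _ =>
      have : Rule.mk _ c = Rule.ax p := hmem
      cases this
      rfl
  have hq : Derives {Rule.ax p} q := by
    apply h2
    intro C hC
    rw [hstar, Set.union_empty] at hC
    rw [hC]
    exact Derives.intro rfl (by simp)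
  exact hpq ((honly q hq).symm)
end

section
/- Monotonicity of categorical validity fails for base semantics: there exist a formula A and bases 𝔅 ⊆ 𝔇 with ⊨_𝔅 A but not ⊨_𝔇 A. Concretely, A = p → q, 𝔅 = ∅, 𝔇 = {p}: on the empty base p → q is valid (vacuously, since p is not derivable), but on the base {p}, p is derivable while q is not, so p → q is not valid. -/
/-- Monotonicity of categorical validity fails: `p → q` is
valid on the empty base but not on the extension `{p}`. -/
theorem stmt10 (p q : Nat) (hpq : p ≠ q) :
    Valid ∅ (Form.imp (Form.atom p) (Form.atom q)) ∧
    ¬ Valid {Rule.ax p} (Form.imp (Form.atom p) (Form.atom q)) ∧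
    ∃ (A : Form) (𝔅 𝔇 : Set Rule), 𝔅 ⊆ 𝔇 ∧ Valid 𝔅 A ∧ ¬ Valid 𝔇 A := by
  have hval : Valid ∅ (Form.imp (Form.atom p) (Form.atom q)) := by
    intro h
    cases h with
    | intro hmem _ => exact absurd hmem (Set.notMem_empty _)
  have hnot : ¬ Valid {Rule.ax p} (Form.imp (Form.atom p) (Form.atom q)) := by
    intro h
    have hp : Derives {Rule.ax p} p :=
      Derives.intro rfl (by intro r hr; cases hr)
    have hq := h hp
    cases hq with
    | intro hmem _ =>
      have := Set.mem_singleton_iff.mp hmem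
      injection this with h1 h2
      exact hpq h2.symm
  exact ⟨hval, hnot, Form.imp (Form.atom p) (Form.atom q), ∅, {Rule.ax p},
    Set.empty_subset _, hval, hnot⟩
end

section
/- Conditional global invertibility between Sandqvist's and standard base semantics: fix a base 𝔅. If for all finite Γ and formulas A, Γ ⊨ˢ_𝔅 A implies Γ ⊨_𝔅 A, then conversely for all Γ and A, Γ ⊨_𝔅 A implies Γ ⊨ˢ_𝔅 A. -/
/-- Conditional global invertibility between Sandqvist's and
standard base semantics on a fixed base. -/
theorem stmt11 (𝔅 : Set Rule)
    (h : ∀ (Γ : Set Form) (A : Form), Γ.Finite → SCons 𝔅 Γ A → Cons 𝔅 Γ A) :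
    ∀ (Γ : Set Form) (A : Form), Γ.Finite → Cons 𝔅 Γ A → SCons 𝔅 Γ A := by
  have sv : ∀ A : Form, SValid 𝔅 A → Valid 𝔅 A := by
    intro A hA
    exact h ∅ A Set.finite_empty (fun _ => hA) (by simp)
  have vs : ∀ A : Form, Valid 𝔅 A → SValid 𝔅 A := by
    intro A
    induction A with
    | atom a => exact id
    | bot => exact id
    | and A C ihA ihC => exact fun ⟨ha, hc⟩ => ⟨ihA ha, ihC hc⟩
    | or A C ihA ihC =>
      rintro (ha | hc) c f g
      · exact f (ihA ha)
      · exact g (ihC hc)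
    | imp A C ihA ihC =>
      intro hv hs
      exact ihC (hv (sv A hs))
  intro Γ A _ hc hΓ
  exact vs A (hc fun C hC => sv C (hΓ C hC))
end

section
/- Intuitionistic propositional logic is sound over non-monotonic standard base semantics: if Γ ⊢_IL A then for every atomic base 𝔅, Γ ⊨_𝔅 A. In particular each clause is verified: e.g., if ⊨_𝔅 A→B and ⊨_𝔅 A then ⊨_𝔅 B (modus ponens is valid on every base), and ⊨_𝔅 A→(B→A) for all A, B, 𝔅. -/
/-- Intuitionistic propositional logic is sound over
non-monotonic standard base semantics; in particular modus ponens is valid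
on every base and `A → (B → A)` is valid on every base. -/
theorem stmt15 :
    (∀ (Γ : Set Form) (A : Form), IL Γ A → ∀ 𝔅 : Set Rule, Cons 𝔅 Γ A) ∧
    (∀ (𝔅 : Set Rule) (A B : Form),
      Valid 𝔅 (Form.imp A B) → Valid 𝔅 A → Valid 𝔅 B) ∧
    (∀ (𝔅 : Set Rule) (A B : Form),
      Valid 𝔅 (Form.imp A (Form.imp B A))) := by
  refine ⟨?_, fun 𝔅 A B h ha => h ha, fun 𝔅 A B ha _ => ha⟩
  intro Γ A h 𝔅
  induction h with
  | ax hA => exact fun hΓ => hΓ _ hA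
  | andI _ _ ih1 ih2 => exact fun hΓ => ⟨ih1 hΓ, ih2 hΓ⟩
  | andE1 _ ih => exact fun hΓ => (ih hΓ).1
  | andE2 _ ih => exact fun hΓ => (ih hΓ).2
  | orI1 _ ih => exact fun hΓ => Or.inl (ih hΓ)
  | orI2 _ ih => exact fun hΓ => Or.inr (ih hΓ)
  | orE _ _ _ ih ih1 ih2 =>
      intro hΓ
      rcases ih hΓ with hA | hB
      · exact ih1 (fun C hC => by rcases hC with rfl | hC; exact hA; exact hΓ _ hC)
      · exact ih2 (fun C hC => by rcases hC with rfl | hC; exact hB; exact hΓ _ hC)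
  | impI _ ih =>
      exact fun hΓ hA => ih (fun C hC => by rcases hC with rfl | hC; exact hA; exact hΓ _ hC)
  | impE _ _ ih1 ih2 => exact fun hΓ => ih1 hΓ (ih2 hΓ)
  | botE _ ih => exact fun hΓ => (ih hΓ).elim
end
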